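/- If m ≥ 1 and n ≥ 2 are integers with n ≡ 2 (mod 3), then the bondage number of K_m ⊠ P_n satisfies b(K_m ⊠ P_n) ≥ m; equivalently, for every edge set Z ⊆ E(K_m ⊠ P_n) with |Z| < m, one has γ(K_m ⊠ P_n − Z) = γ(K_m ⊠ P_n). -/

import Mathlib

open SimpleGraph Finset

/-- `D` is a dominating set of `G`: every vertex is in `D` or adjacent to a vertex of `D`. -/
def SimpleGraph.IsDominatingSet {V : Type*} (G : SimpleGraph V) (D : Set V) : Prop :=
  ∀ v : V, v ∈ D ∨ ∃ u ∈ D, G.Adj u v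

/-- The domination number of a finite graph. -/
noncomputable def SimpleGraph.dominationNumber {V : Type*} [Fintype V]
    (G : SimpleGraph V) : ℕ :=
  sInf {k | ∃ D : Finset V, D.card = k ∧ G.IsDominatingSet ↑D}

/-- The bondage number of a finite graph: the least size of a set of edges whose removal
increases the domination number. -/
noncomputable def SimpleGraph.bondageNumber {V : Type*} [Fintype V]
    (G : SimpleGraph V) : ℕ :=
  sInf {k | ∃ Z : Finset (Sym2 V), Z.card = k ∧ (↑Z : Set (Sym2 V)) ⊆ G.edgeSet ∧
    G.dominationNumber < (G.deleteEdges ↑Z).dominationNumber}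

/-- The strong product of two simple graphs. -/
def SimpleGraph.strongProd {V W : Type*} (G : SimpleGraph V) (H : SimpleGraph W) :
    SimpleGraph (V × W) :=
  SimpleGraph.fromRel (fun a b =>
    (a.1 = b.1 ∧ H.Adj a.2 b.2) ∨ (G.Adj a.1 b.1 ∧ a.2 = b.2) ∨
      (G.Adj a.1 b.1 ∧ H.Adj a.2 b.2))

infixl:70 " ⊠ " => SimpleGraph.strongProd

/-! Write `n = 3k + 2`. A vertex of `K_m ⊠ P_n` dominates at most three consecutive columns, so
`γ(K_m ⊠ P_n) ≥ k + 1`. Conversely, fewer than `m` edges touch fewer than `2m` vertices, hence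
cover all `m` vertices of at most one column. The `k + 1` columns `1, 4, …, 3s - 2, 3s, 3s + 3, …`
dominate `P_n` for every shift `s`, and `s` can be chosen so that they avoid that column; a vertex
untouched by the deleted edges in each chosen column then dominates `K_m ⊠ P_n - Z` with `k + 1`
vertices. Deleting all edges raises `γ` to `mn > k + 1`, so some edge set does increase `γ`
(else the bondage number would be the junk value `sInf ∅ = 0`), and every such set has at least
`m` edges. -/

namespace SimpleGraph

variable {V : Type*} {G H : SimpleGraph V}

theorem IsDominatingSet.mono {D : Set V} (hGH : G ≤ H) (hD : G.IsDominatingSet D) :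
    H.IsDominatingSet D :=
  fun v => (hD v).imp_right fun ⟨u, hu, huv⟩ => ⟨u, hu, hGH huv⟩

theorem adj_deleteEdges_of_forall_notMem {Z : Set (Sym2 V)} {u v : V} (hu : ∀ e ∈ Z, u ∉ e)
    (h : G.Adj u v) : (G.deleteEdges Z).Adj u v :=
  (deleteEdges_adj ..).2 ⟨h, fun he => hu _ he (Sym2.mem_mk_left u v)⟩

variable [Fintype V]

theorem exists_isDominatingSet_card_eq_dominationNumber (G : SimpleGraph V) :
    ∃ D : Finset V, D.card = G.dominationNumber ∧ G.IsDominatingSet ↑D :=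
  Nat.sInf_mem (s := {k | ∃ D : Finset V, D.card = k ∧ G.IsDominatingSet ↑D})
    ⟨_, univ, rfl, fun v => Or.inl (mem_coe.2 (mem_univ v))⟩

theorem dominationNumber_le_card {D : Finset V} (hD : G.IsDominatingSet ↑D) :
    G.dominationNumber ≤ D.card :=
  Nat.sInf_le ⟨D, rfl, hD⟩

theorem le_dominationNumber {k : ℕ} (h : ∀ D : Finset V, G.IsDominatingSet ↑D → k ≤ D.card) :
    k ≤ G.dominationNumber := by
  obtain ⟨D, hcard, hD⟩ := G.exists_isDominatingSet_card_eq_dominationNumber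
  exact hcard ▸ h D hD

theorem dominationNumber_anti (hGH : G ≤ H) : H.dominationNumber ≤ G.dominationNumber := by
  obtain ⟨D, hcard, hD⟩ := G.exists_isDominatingSet_card_eq_dominationNumber
  exact hcard ▸ dominationNumber_le_card (hD.mono hGH)

theorem dominationNumber_bot : (⊥ : SimpleGraph V).dominationNumber = Fintype.card V := by
  refine le_antisymm (card_univ (α := V) ▸ dominationNumber_le_card fun v => Or.inl (by simp))
    (le_dominationNumber fun D hD => ?_)
  exact card_univ (α := V) ▸ card_le_card fun v _ => by simpa using hD v

theorem le_bondageNumber {m : ℕ} (hG : G.dominationNumber < Fintype.card V)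
    (h : ∀ Z : Finset (Sym2 V), ↑Z ⊆ G.edgeSet → Z.card < m →
      (G.deleteEdges ↑Z).dominationNumber = G.dominationNumber) :
    m ≤ G.bondageNumber := by
  classical
  refine le_csInf
    ⟨_, G.edgeSet.toFinset, rfl, by simp, by simpa [dominationNumber_bot] using hG⟩ ?_
  rintro _ ⟨Z, rfl, hZG, hlt⟩
  by_contra! hZ
  exact hlt.ne' (h Z hZG hZ)

end SimpleGraph

theorem Finset.card_le_two_mul_card_of_forall_exists_mem {α : Type*} [DecidableEq α]
    {S : Finset α} {Z : Finset (Sym2 α)} (h : ∀ v ∈ S, ∃ e ∈ Z, v ∈ e) :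
    S.card ≤ 2 * Z.card :=
  calc S.card ≤ (Z.biUnion Sym2.toFinset).card := card_le_card fun v hv => by
        obtain ⟨e, he, hve⟩ := h v hv
        exact mem_biUnion.2 ⟨e, he, Sym2.mem_toFinset.2 hve⟩
    _ ≤ Z.card * 2 := card_biUnion_le_card_mul _ _ _ fun e _ => by
        rw [Sym2.card_toFinset]; split_ifs <;> omega
    _ = 2 * Z.card := mul_comm ..

section StrongProdPath

variable {m n : ℕ} {Z : Finset (Sym2 (Fin m × Fin n))}

theorem top_strongProd_pathGraph_adj {a b : Fin m × Fin n} :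
    ((⊤ : SimpleGraph (Fin m)) ⊠ pathGraph n).Adj a b ↔
      a ≠ b ∧ (a.2 : ℕ) ≤ b.2 + 1 ∧ (b.2 : ℕ) ≤ a.2 + 1 := by
  simp only [SimpleGraph.strongProd, fromRel_adj, top_adj, pathGraph_adj, ne_eq, Prod.ext_iff,
    Fin.ext_iff]
  omega

theorem card_filter_dist_le_one_le_three (j : ℕ) :
    (univ.filter fun c : Fin n => (c : ℕ) ≤ j + 1 ∧ j ≤ c + 1).card ≤ 3 :=
  calc _ ≤ (Icc (j - 1) (j + 1)).card :=
        card_le_card_of_injOn Fin.val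
          (fun c hc => by
            simp only [mem_coe, mem_filter, mem_univ, true_and, mem_Icc] at hc ⊢; omega)
          Fin.val_injective.injOn
    _ ≤ 3 := by rw [Nat.card_Icc]; omega

theorem le_three_mul_card_of_isDominatingSet (hm : 0 < m) {D : Finset (Fin m × Fin n)}
    (hD : ((⊤ : SimpleGraph (Fin m)) ⊠ pathGraph n).IsDominatingSet ↑D) : n ≤ 3 * D.card := by
  classical
  have hcover : ∀ c : Fin n, c ∈ D.biUnion fun d =>
      univ.filter fun c : Fin n => (c : ℕ) ≤ d.2 + 1 ∧ (d.2 : ℕ) ≤ c + 1 := by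
    intro c
    rcases hD (⟨0, hm⟩, c) with h | ⟨u, hu, huv⟩
    · exact mem_biUnion.2 ⟨_, h, by simp⟩
    · simp only [top_strongProd_pathGraph_adj] at huv
      exact mem_biUnion.2 ⟨u, hu, by simp only [mem_filter, mem_univ, true_and]; omega⟩
  calc n = (univ : Finset (Fin n)).card := by simp
    _ ≤ D.card * 3 := (card_le_card fun c _ => hcover c).trans
        (card_biUnion_le_card_mul _ _ _ fun d _ => card_filter_dist_le_one_le_three _)
    _ = 3 * D.card := mul_comm ..

theorem exists_forall_notMem_or_of_ne (hZ : Z.card < m) {c₁ c₂ : Fin n} (hne : c₁ ≠ c₂) :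
    (∃ r : Fin m, ∀ e ∈ Z, (r, c₁) ∉ e) ∨ ∃ r : Fin m, ∀ e ∈ Z, (r, c₂) ∉ e := by
  classical
  by_contra! h
  have := card_le_two_mul_card_of_forall_exists_mem (S := univ ×ˢ {c₁, c₂}) (Z := Z)
    fun v hv => by
      simp only [mem_product, mem_univ, mem_insert, mem_singleton, true_and] at hv
      rcases hv with rfl | rfl
      exacts [h.1 v.1, h.2 v.1]
  simp only [card_product, card_univ, Fintype.card_fin, card_pair hne] at this
  omega

def shiftedColumns (n s : ℕ) : Finset (Fin n) :=
  univ.filter fun c => (c : ℕ) < 3 * s ∧ (c : ℕ) % 3 = 1 ∨ 3 * s ≤ c ∧ (c : ℕ) % 3 = 0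

theorem card_shiftedColumns_le (n s : ℕ) : (shiftedColumns n s).card ≤ n / 3 + 1 :=
  calc (shiftedColumns n s).card ≤ (range (n / 3 + 1)).card :=
        card_le_card_of_injOn (fun c => (c : ℕ) / 3)
          (fun c _ => by have := c.isLt; simp only [coe_range, Set.mem_Iio]; omega)
          (fun c hc c' hc' hcc' => by
            simp only [shiftedColumns, mem_coe, mem_filter, mem_univ, true_and] at hc hc' hcc'
            exact Fin.ext (by omega))
    _ = n / 3 + 1 := card_range _

theorem exists_mem_shiftedColumns_near (h3 : n % 3 = 2) (s : ℕ) (j : Fin n) :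
    ∃ c ∈ shiftedColumns n s, (c : ℕ) ≤ j + 1 ∧ (j : ℕ) ≤ c + 1 := by
  have := j.isLt
  refine ⟨⟨if (j : ℕ) < 3 * s then 3 * (j / 3) + 1 else 3 * ((j + 1) / 3),
    by split_ifs <;> omega⟩, ?_, ?_⟩
  · simp only [shiftedColumns, mem_filter, mem_univ, true_and]
    split_ifs <;> omega
  · simp only
    split_ifs <;> omega

theorem exists_notMem_shiftedColumns (b : Fin n) : ∃ s, b ∉ shiftedColumns n s :=
  ⟨if (b : ℕ) % 3 = 1 then b / 3 else b / 3 + 1, by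
    simp only [shiftedColumns, mem_filter, mem_univ, true_and]; split_ifs <;> omega⟩

theorem exists_shiftedColumns_forall_exists_forall_notMem (hZ : Z.card < m) :
    ∃ s, ∀ c ∈ shiftedColumns n s, ∃ r : Fin m, ∀ e ∈ Z, (r, c) ∉ e := by
  by_cases hbad : ∃ b : Fin n, ¬∃ r : Fin m, ∀ e ∈ Z, (r, b) ∉ e
  · obtain ⟨b, hb⟩ := hbad
    obtain ⟨s, hbs⟩ := exists_notMem_shiftedColumns b
    exact ⟨s, fun c hc =>
      (exists_forall_notMem_or_of_ne hZ (ne_of_mem_of_not_mem hc hbs)).resolve_right hb⟩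
  · exact ⟨0, fun c _ => not_exists_not.1 hbad c⟩

theorem dominationNumber_top_strongProd_pathGraph_deleteEdges_le (h3 : n % 3 = 2)
    (hZ : Z.card < m) :
    (((⊤ : SimpleGraph (Fin m)) ⊠ pathGraph n).deleteEdges ↑Z).dominationNumber ≤ n / 3 + 1 := by
  classical
  obtain ⟨s, hs⟩ := exists_shiftedColumns_forall_exists_forall_notMem hZ
  have : Nonempty (Fin m) := ⟨⟨0, by omega⟩⟩
  choose! row hrow using hs
  have hdom : (((⊤ : SimpleGraph (Fin m)) ⊠ pathGraph n).deleteEdges ↑Z).IsDominatingSet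
      ↑((shiftedColumns n s).image fun c => (row c, c)) := by
    intro v
    obtain ⟨c, hc, hnear⟩ := exists_mem_shiftedColumns_near h3 s v.2
    have hmem : (row c, c) ∈ (shiftedColumns n s).image fun c => (row c, c) :=
      mem_image_of_mem _ hc
    by_cases hv : v = (row c, c)
    · exact Or.inl (hv ▸ hmem)
    · exact Or.inr ⟨_, hmem, adj_deleteEdges_of_forall_notMem (hrow c hc)
        (top_strongProd_pathGraph_adj.2 ⟨Ne.symm hv, hnear⟩)⟩
  exact (dominationNumber_le_card hdom).trans (card_image_le.trans (card_shiftedColumns_le n s))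

theorem dominationNumber_top_strongProd_pathGraph (hm : 0 < m) (h3 : n % 3 = 2) :
    ((⊤ : SimpleGraph (Fin m)) ⊠ pathGraph n).dominationNumber = n / 3 + 1 := by
  refine le_antisymm ?_ (le_dominationNumber fun D hD => ?_)
  · simpa using dominationNumber_top_strongProd_pathGraph_deleteEdges_le h3 (Z := ∅) (by simpa)
  · have := le_three_mul_card_of_isDominatingSet hm hD
    omega

theorem dominationNumber_top_strongProd_pathGraph_deleteEdges (h3 : n % 3 = 2)
    (hZ : Z.card < m) :
    (((⊤ : SimpleGraph (Fin m)) ⊠ pathGraph n).deleteEdges ↑Z).dominationNumber =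
      ((⊤ : SimpleGraph (Fin m)) ⊠ pathGraph n).dominationNumber := by
  refine le_antisymm ?_ (dominationNumber_anti (deleteEdges_le _))
  rw [dominationNumber_top_strongProd_pathGraph (by omega) h3]
  exact dominationNumber_top_strongProd_pathGraph_deleteEdges_le h3 hZ

end StrongProdPath

theorem bondage_ge_of_mod_three_eq_two_general (m n : ℕ) (hm : 1 ≤ m)
    (h3 : n % 3 = 2) :
    m ≤ ((⊤ : SimpleGraph (Fin m)) ⊠ pathGraph n).bondageNumber ∧
    ∀ Z : Finset (Sym2 (Fin m × Fin n)),
      (↑Z : Set (Sym2 (Fin m × Fin n))) ⊆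
          ((⊤ : SimpleGraph (Fin m)) ⊠ pathGraph n).edgeSet →
      Z.card < m →
      (((⊤ : SimpleGraph (Fin m)) ⊠ pathGraph n).deleteEdges ↑Z).dominationNumber =
        ((⊤ : SimpleGraph (Fin m)) ⊠ pathGraph n).dominationNumber := by
  refine ⟨le_bondageNumber ?_ fun _ _ hZ =>
      dominationNumber_top_strongProd_pathGraph_deleteEdges h3 hZ,
    fun _ _ hZ => dominationNumber_top_strongProd_pathGraph_deleteEdges h3 hZ⟩
  rw [dominationNumber_top_strongProd_pathGraph hm h3, Fintype.card_prod, Fintype.card_fin,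
    Fintype.card_fin]
  calc n / 3 + 1 < n := by omega
    _ ≤ m * n := Nat.le_mul_of_pos_left n hm

/-- **Lemma.** If `m ≥ 1`, `n ≥ 2` and `n ≡ 2 (mod 3)`, then `b(K_m ⊠ P_n) ≥ m`;
equivalently, removing any set of fewer than `m` edges does not change the
domination number. -/
theorem bondage_ge_of_mod_three_eq_two (m n : ℕ) (hm : 1 ≤ m) (hn : 2 ≤ n)
    (h3 : n % 3 = 2) :
    m ≤ ((⊤ : SimpleGraph (Fin m)) ⊠ pathGraph n).bondageNumber ∧
    ∀ Z : Finset (Sym2 (Fin m × Fin n)),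
      (↑Z : Set (Sym2 (Fin m × Fin n))) ⊆
          ((⊤ : SimpleGraph (Fin m)) ⊠ pathGraph n).edgeSet →
      Z.card < m →
      (((⊤ : SimpleGraph (Fin m)) ⊠ pathGraph n).deleteEdges ↑Z).dominationNumber =
        ((⊤ : SimpleGraph (Fin m)) ⊠ pathGraph n).dominationNumber :=
  bondage_ge_of_mod_three_eq_two_general m n hm h3
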